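/- The fixed-point sublattice E₈^τ = {x ∈ E₈ : τ(x) = x} is the set of all vectors m₁e₀ + m₂(e₁+e₂+⋯+e₇) with (m₁,m₂) ∈ K₇, and the linear map ψ(m₁,m₂) = m₁e₀ + m₂(e₁+⋯+e₇) is an isometry from K₇ onto E₈^τ (i.e., ψ is an injective additive map with image E₈^τ satisfying (ψ(u),ψ(v))_{ℝ⁸} = (u,v)_{K₇} for all u,v ∈ K₇). -/

import Mathlib

/-- The `E₈` lattice inside `ℝ⁸`: all coordinates in `ℤ` or all in `ℤ + 1/2`,
with even coordinate sum. -/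
def E8 : Set (Fin 8 → ℝ) :=
  {x | ((∀ i, ∃ k : ℤ, x i = k) ∨ (∀ i, ∃ k : ℤ, x i = k + 1 / 2)) ∧
    ∃ k : ℤ, ∑ i, x i = 2 * k}

/-- The order-7 isometry `τ` of `ℝ⁸`: `e₀↦e₀, e₁↦e₇, eᵢ↦eᵢ₋₁` for `2 ≤ i ≤ 7`,
written in coordinates. -/
def tau7 (x : Fin 8 → ℝ) : Fin 8 → ℝ := x ∘ ![0, 2, 3, 4, 5, 6, 7, 1]

/-- The rank-2 lattice `K₇ ⊆ ℚ²`: either both coordinates integral with even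
sum, or both in `ℤ + 1/2` with odd sum. -/
def K7lat : Set (Fin 2 → ℚ) :=
  {m | ((∀ i, ∃ k : ℤ, m i = k) ∧ ∃ k : ℤ, m 0 + m 1 = 2 * k) ∨
    ((∀ i, ∃ k : ℤ, m i = k + 1 / 2) ∧ ∃ k : ℤ, m 0 + m 1 = 2 * k + 1)}

/-- The bilinear form on `K₇`, whose quadratic form is `m₁² + 7m₂²`. -/
def bK7 (u v : Fin 2 → ℚ) : ℚ := u 0 * v 0 + 7 * (u 1 * v 1)

/-- The map `ψ(m₁,m₂) = m₁e₀ + m₂(e₁+⋯+e₇)`. -/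
def psiK7 (m : Fin 2 → ℚ) : Fin 8 → ℝ :=
  ![(m 0 : ℝ), (m 1 : ℝ), (m 1 : ℝ), (m 1 : ℝ), (m 1 : ℝ), (m 1 : ℝ), (m 1 : ℝ), (m 1 : ℝ)]

/-!
A `τ`-fixed vector is constant on the coordinates `1, …, 7`, so it is `ψ m` for the pair `m` of
its first two coordinates, which are rational because all coordinates of `E₈` vectors are.
Then `ψ m ∈ E₈ ↔ m ∈ K₇`: the integrality conditions match coordinatewise, and the coordinate
sum `m₁ + 7 m₂` differs from `m₁ + m₂` by `6 m₂`, which is even for integral `m₂` and odd for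
half-integral `m₂`.
-/

section psiK7
variable (m : Fin 2 → ℚ)

@[simp] lemma psiK7_zero : psiK7 m 0 = m 0 := rfl

@[simp] lemma psiK7_succ (j : Fin 7) : psiK7 m j.succ = m 1 := by
  fin_cases j <;> rfl

lemma forall_psiK7_iff (P : ℝ → Prop) : (∀ i, P (psiK7 m i)) ↔ ∀ j, P (m j) := by
  simp [Fin.forall_fin_succ]

lemma sum_psiK7 : ∑ i, psiK7 m i = m 0 + 7 * m 1 := by
  simp [Fin.sum_univ_succ]

lemma sum_psiK7_mul_psiK7 (u v : Fin 2 → ℚ) :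
    ∑ i, psiK7 u i * psiK7 v i = bK7 u v := by
  simp [Fin.sum_univ_succ, bK7]

lemma psiK7_add (u v : Fin 2 → ℚ) : psiK7 (u + v) = psiK7 u + psiK7 v := by
  ext i; cases i using Fin.cases <;> simp

lemma psiK7_injective : Function.Injective psiK7 := by
  intro u v h
  ext j
  fin_cases j
  · simpa using congrFun h 0
  · have h1 := congrFun h (0 : Fin 7).succ
    rw [psiK7_succ, psiK7_succ] at h1
    exact_mod_cast h1

lemma tau7_psiK7 : tau7 (psiK7 m) = psiK7 m := by
  ext i; fin_cases i <;> rfl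

end psiK7

lemma apply_succ_eq_of_tau7_eq_self {x : Fin 8 → ℝ} (h : tau7 x = x) (j : Fin 7) :
    x j.succ = x 1 := by
  have hx := congrFun h
  simp only [tau7, Function.comp_apply] at hx
  have := hx 1; have := hx 2; have := hx 3; have := hx 4; have := hx 5; have := hx 6
  fin_cases j <;> simp_all

lemma exists_add_int_eq_two_mul_iff (a : ℚ) (b : ℤ) :
    (∃ k : ℤ, a + b = 2 * k) ↔ ∃ k : ℤ, a + 7 * b = 2 * k := by
  constructor
  · rintro ⟨k, hk⟩; exact ⟨k + 3 * b, by push_cast; linarith⟩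
  · rintro ⟨k, hk⟩; exact ⟨k - 3 * b, by push_cast; linarith⟩

lemma exists_add_half_int_eq_two_mul_add_one_iff (a : ℚ) (b : ℤ) :
    (∃ k : ℤ, a + (b + 1 / 2) = 2 * k + 1) ↔ ∃ k : ℤ, a + 7 * (b + 1 / 2) = 2 * k := by
  constructor
  · rintro ⟨k, hk⟩; exact ⟨k + 3 * b + 2, by push_cast; linarith⟩
  · rintro ⟨k, hk⟩; exact ⟨k - 3 * b - 2, by push_cast; linarith⟩

lemma mem_K7lat_iff (m : Fin 2 → ℚ) :
    m ∈ K7lat ↔ ((∀ j, ∃ k : ℤ, m j = k) ∨ (∀ j, ∃ k : ℤ, m j = k + 1 / 2)) ∧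
      ∃ k : ℤ, m 0 + 7 * m 1 = 2 * k := by
  constructor
  · rintro (⟨hint, hsum⟩ | ⟨hhalf, hsum⟩)
    · obtain ⟨b, hb⟩ := hint 1
      rw [hb, exists_add_int_eq_two_mul_iff] at hsum
      exact ⟨.inl hint, hb ▸ hsum⟩
    · obtain ⟨b, hb⟩ := hhalf 1
      rw [hb, exists_add_half_int_eq_two_mul_add_one_iff] at hsum
      exact ⟨.inr hhalf, hb ▸ hsum⟩
  · rintro ⟨hint | hhalf, hsum⟩
    · obtain ⟨b, hb⟩ := hint 1
      rw [hb, ← exists_add_int_eq_two_mul_iff] at hsum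
      exact .inl ⟨hint, hb ▸ hsum⟩
    · obtain ⟨b, hb⟩ := hhalf 1
      rw [hb, ← exists_add_half_int_eq_two_mul_add_one_iff] at hsum
      exact .inr ⟨hhalf, hb ▸ hsum⟩

lemma psiK7_mem_E8_iff (m : Fin 2 → ℚ) : psiK7 m ∈ E8 ↔ m ∈ K7lat := by
  rw [mem_K7lat_iff]
  have cast_eq_half_int (q : ℚ) (k : ℤ) : (q : ℝ) = k + 1 / 2 ↔ q = k + 1 / 2 := by
    rw [← Rat.cast_inj (α := ℝ)]; push_cast; rfl
  simp only [E8, Set.mem_ofPred_eq, forall_psiK7_iff (P := fun r => ∃ k : ℤ, r = k),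
    forall_psiK7_iff (P := fun r => ∃ k : ℤ, r = k + 1 / 2), sum_psiK7, cast_eq_half_int]
  norm_cast

lemma exists_rat_eq_of_mem_E8 {x : Fin 8 → ℝ} (hx : x ∈ E8) (i : Fin 8) : ∃ q : ℚ, x i = q := by
  obtain ⟨hint | hhalf, -⟩ := hx
  · obtain ⟨k, hk⟩ := hint i
    exact ⟨k, by simp [hk]⟩
  · obtain ⟨k, hk⟩ := hhalf i
    exact ⟨k + 1 / 2, by simp [hk]⟩

lemma exists_psiK7_eq_of_mem_E8_of_tau7_eq_self {x : Fin 8 → ℝ} (hx : x ∈ E8)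
    (hτ : tau7 x = x) : ∃ m, psiK7 m = x := by
  obtain ⟨a, ha⟩ := exists_rat_eq_of_mem_E8 hx 0
  obtain ⟨b, hb⟩ := exists_rat_eq_of_mem_E8 hx 1
  refine ⟨![a, b], funext fun i => ?_⟩
  cases i using Fin.cases with
  | zero => simp [ha]
  | succ j => simp [apply_succ_eq_of_tau7_eq_self hτ, hb]

/-- the fixed-point sublattice `E₈^τ` is exactly the image of `K₇`
under `ψ`, and `ψ` is an isometry from `K₇` onto `E₈^τ`: an injective additive
map with image `E₈^τ` satisfying `(ψu, ψv)_{ℝ⁸} = (u,v)_{K₇}` for all `u, v ∈ K₇`. -/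
theorem E8_tau_fixed_lattice :
    {x | x ∈ E8 ∧ tau7 x = x} = psiK7 '' K7lat ∧
    (∀ u v : Fin 2 → ℚ, psiK7 (u + v) = psiK7 u + psiK7 v) ∧
    Function.Injective psiK7 ∧
    (∀ u ∈ K7lat, ∀ v ∈ K7lat, ∑ i, psiK7 u i * psiK7 v i = ((bK7 u v : ℚ) : ℝ)) := by
  refine ⟨?_, psiK7_add, psiK7_injective, fun u _ v _ => sum_psiK7_mul_psiK7 u v⟩
  ext x
  constructor
  · rintro ⟨hx, hτ⟩
    obtain ⟨m, rfl⟩ := exists_psiK7_eq_of_mem_E8_of_tau7_eq_self hx hτ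
    exact ⟨m, (psiK7_mem_E8_iff m).1 hx, rfl⟩
  · rintro ⟨m, hm, rfl⟩
    exact ⟨(psiK7_mem_E8_iff m).2 hm, tau7_psiK7 m⟩
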